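/- arXiv:1809.03691 — 6 statements merged into one kernel-verified Lean document; each statement's English description precedes it below -/
import Mathlib

section
/- Let b : {p ∈ (ℤ_{≥0})^m : |p| = M} → ℂ^n be a family of vectors such that for all w ∈ ℂ^m, ‖w‖^{2M} = ‖∑_{|p|=M} b_p w^p‖^2. Then for distinct multi-indices p ≠ q with |p| = |q| = M one has ⟨b_p, b_q⟩ = 0, and ‖b_p‖^2 = M!/(p_1!⋯p_m!) for every p. -/
/-!
Expanding both sides, the hypothesis says that
`∑_{p,q} (⟪b p, b q⟫ - δ_{pq} M!/p!) · conj(w)^p · w^q = 0` for every `w ∈ ℂᵐ`.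
The functions `w ↦ conj(w)^p · w^q` are linearly independent: after the substitution
`w = a + I b`, a polynomial in `(conj w, w)` that vanishes on `ℂᵐ` becomes a polynomial in
`(a, b)` that vanishes on `ℝ²ᵐ`, hence is zero, and the substitution is invertible.
So every coefficient vanishes.
-/

open Finset ComplexConjugate MvPolynomial

theorem MvPolynomial.eq_zero_of_eval_sumElim_conj {σ : Type*} {P : MvPolynomial (σ ⊕ σ) ℂ}
    (h : ∀ w : σ → ℂ, eval (Sum.elim (conj ∘ w) w) P = 0) : P = 0 := by
  let f : σ ⊕ σ → MvPolynomial (σ ⊕ σ) ℂ :=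
    Sum.elim (fun i ↦ X (.inl i) - C Complex.I * X (.inr i))
      (fun i ↦ X (.inl i) + C Complex.I * X (.inr i))
  have heval_bind : ∀ v, eval v (bind₁ f P) = eval (fun j ↦ eval v (f j)) P := fun v ↦
    eval₂Hom_bind₁ _ _ _ _
  have hbind : bind₁ f P = 0 := by
    refine funext_set (fun _ ↦ Set.range ((↑) : ℝ → ℂ))
      (fun _ ↦ Set.infinite_range_of_injective Complex.ofReal_injective) fun v hv ↦ ?_
    choose a ha using fun j ↦ hv j trivial
    rw [heval_bind, map_zero]
    convert h fun i ↦ v (.inl i) + Complex.I * v (.inr i) using 2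
    ext (i | i) <;> simp [f, ← ha, Complex.conj_ofReal, sub_eq_add_neg]
  refine funext fun z ↦ ?_
  -- `(a, b) = ((x + y) / 2, I (x - y) / 2)` inverts `(x, y) = (a - I b, a + I b)`.
  have hz := congrArg (eval (Sum.elim (fun i ↦ (z (.inl i) + z (.inr i)) / 2)
    (fun i ↦ Complex.I * (z (.inl i) - z (.inr i)) / 2))) hbind
  rw [heval_bind, map_zero] at hz
  rw [map_zero, ← hz]
  congr 2 with j
  rcases j with i | i <;>
    simp only [f, Sum.elim_inl, Sum.elim_inr, map_add, map_sub, map_mul, eval_X, eval_C]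
  · linear_combination (z (.inl i) - z (.inr i)) / 2 * Complex.I_sq
  · linear_combination (z (.inr i) - z (.inl i)) / 2 * Complex.I_sq

theorem eq_zero_of_forall_sum_conj_pow_mul_pow_eq_zero {σ : Type*} [Fintype σ]
    {s : Finset ((σ → ℕ) × (σ → ℕ))} {c : (σ → ℕ) × (σ → ℕ) → ℂ}
    (h : ∀ w : σ → ℂ, ∑ pq ∈ s, c pq * ∏ i, conj (w i) ^ pq.1 i * w i ^ pq.2 i = 0) :
    ∀ pq ∈ s, c pq = 0 := by
  classical
  let e : (σ → ℕ) × (σ → ℕ) ≃ (σ ⊕ σ →₀ ℕ) :=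
    (Equiv.sumArrowEquivProdArrow σ σ ℕ).symm.trans Finsupp.equivFunOnFinite.symm
  have hP : ∑ pq ∈ s, monomial (e pq) (c pq) = 0 := by
    refine eq_zero_of_eval_sumElim_conj fun w ↦ ?_
    simp only [map_sum, eval_monomial, e, Equiv.trans_apply, Finsupp.coe_equivFunOnFinite_symm,
      Finsupp.prod_fintype _ _ (fun _ ↦ pow_zero _), Fintype.prod_sum_type, ← prod_mul_distrib]
    exact h w
  intro pq hpq
  simpa [coeff_sum, coeff_monomial, e.injective.eq_iff, hpq] using congrArg (coeff (e pq)) hP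

theorem Nat.cast_multinomial {α K : Type*} [Field K] [CharZero K] (s : Finset α) (f : α → ℕ) :
    (Nat.multinomial s f : K) = (∑ i ∈ s, f i).factorial / ∏ i ∈ s, ((f i).factorial : K) := by
  rw [Nat.multinomial, Nat.cast_div (Nat.prod_factorial_dvd_factorial_sum s f)
    (Nat.cast_ne_zero.2 (prod_ne_zero_iff.2 fun i _ ↦ Nat.factorial_ne_zero _)),
    Nat.cast_prod]

theorem norm_sum_monomial_smul_sq {σ E : Type*} [Fintype σ] [SeminormedAddCommGroup E]
    [InnerProductSpace ℂ E] (s : Finset (σ → ℕ)) (v : (σ → ℕ) → E) (w : σ → ℂ) :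
    ((‖∑ p ∈ s, (∏ i, w i ^ p i) • v p‖ ^ 2 : ℝ) : ℂ) =
      ∑ pq ∈ s ×ˢ s, inner ℂ (v pq.1) (v pq.2) * ∏ i, conj (w i) ^ pq.1 i * w i ^ pq.2 i := by
  rw [Complex.ofReal_pow, ← RCLike.ofReal_eq_complex_ofReal, ← inner_self_eq_norm_sq_to_K,
    sum_inner, sum_product]
  simp only [inner_sum, inner_smul_left, inner_smul_right, map_prod, map_pow, prod_mul_distrib]
  exact sum_congr rfl fun p _ ↦ sum_congr rfl fun q _ ↦ by ring

theorem sum_norm_sq_pow_eq_sum_conj_pow_mul_pow {m : ℕ} (w : Fin m → ℂ) (M : ℕ) :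
    (((∑ i, ‖w i‖ ^ 2) ^ M : ℝ) : ℂ) =
      ∑ pq ∈ Nat.antidiagonalTuple m M ×ˢ Nat.antidiagonalTuple m M,
        (if pq.1 = pq.2 then (Nat.multinomial univ pq.1 : ℂ) else 0) *
          ∏ i, conj (w i) ^ pq.1 i * w i ^ pq.2 i := by
  have hdiag : ∑ p ∈ Nat.antidiagonalTuple m M,
      (Nat.multinomial univ p : ℂ) * ∏ i, conj (w i) ^ p i * w i ^ p i =
        ((∑ i, ‖w i‖ ^ 2) ^ M : ℝ) := by
    simp_rw [← mul_pow, Complex.conj_mul']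
    rw [← piAntidiag_univ_fin_eq_antidiagonalTuple, ← sum_pow_eq_sum_piAntidiag]
    norm_cast
  rw [← hdiag, sum_product]
  exact sum_congr rfl fun p hp ↦ by simp [ite_mul, hp]

/-- If a family of coefficient vectors `b_p ∈ ℂⁿ` indexed by multi-indices of
degree `M` satisfies `‖w‖^{2M} = ‖∑_{|p|=M} w^p b_p‖²` for all `w ∈ ℂᵐ`, then
the `b_p` are pairwise orthogonal and `‖b_p‖² = M!/p!`. -/
theorem coefficient_vectors_orthogonal (m n M : ℕ)
    (b : (Fin m → ℕ) → EuclideanSpace ℂ (Fin n))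
    (h : ∀ w : Fin m → ℂ,
      (∑ i, ‖w i‖ ^ 2) ^ M =
        ‖∑ p ∈ Finset.Nat.antidiagonalTuple m M, (∏ i, w i ^ p i) • b p‖ ^ 2) :
    (∀ p ∈ Finset.Nat.antidiagonalTuple m M,
      ∀ q ∈ Finset.Nat.antidiagonalTuple m M, p ≠ q →
        (inner ℂ (b p) (b q) : ℂ) = 0) ∧
    (∀ p ∈ Finset.Nat.antidiagonalTuple m M,
      ‖b p‖ ^ 2 = (M.factorial : ℝ) / ∏ i, ((p i).factorial : ℝ)) := by
  set A := Nat.antidiagonalTuple m M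
  have hcoeff : ∀ pq ∈ A ×ˢ A, inner ℂ (b pq.1) (b pq.2) -
      (if pq.1 = pq.2 then (Nat.multinomial univ pq.1 : ℂ) else 0) = 0 := by
    refine eq_zero_of_forall_sum_conj_pow_mul_pow_eq_zero fun w ↦ ?_
    calc _ = ((‖∑ p ∈ A, (∏ i, w i ^ p i) • b p‖ ^ 2 : ℝ) : ℂ) - ((∑ i, ‖w i‖ ^ 2) ^ M : ℝ) := by
          rw [norm_sum_monomial_smul_sq, sum_norm_sq_pow_eq_sum_conj_pow_mul_pow,
            ← sum_sub_distrib]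
          simp only [sub_mul]
      _ = 0 := by rw [h w, sub_self]
  refine ⟨fun p hp q hq hpq ↦ by simpa [hpq] using hcoeff (p, q) (mem_product.2 ⟨hp, hq⟩),
    fun p hp ↦ ?_⟩
  have hnorm : inner ℂ (b p) (b p) = (Nat.multinomial univ p : ℂ) := by
    simpa [sub_eq_zero] using hcoeff (p, p) (mem_product.2 ⟨hp, hp⟩)
  rw [inner_self_eq_norm_sq_to_K, RCLike.ofReal_eq_complex_ofReal] at hnorm
  have hsum : ∑ i, p i = M := Nat.mem_antidiagonalTuple.1 hp
  rw [← hsum, ← Nat.cast_multinomial]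
  exact_mod_cast hnorm
end

section
/- If there exists a family of vectors b_p ∈ ℂ^n, indexed by multi-indices p ∈ (ℤ_{≥0})^m with |p| = M, such that ‖w‖^{2M} = ‖∑_{|p|=M} b_p w^p‖^2 for all w ∈ ℂ^m, then n ≥ (M+m-1)!/(M!(m-1)!). -/
/-!
Expanding both sides of `‖w‖^{2M} = ‖∑ p, w^p b_p‖²` gives two polynomials in `(w̄, w)`:
`∑_{p,q} ⟪b_p, b_q⟫ w̄^p w^q` and `∑_p (M choose p) w̄^p w^p`. Such a polynomial identity forces
equality of coefficients, because in the real coordinates `w = x + i y` a polynomial in `(w̄, w)`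
becomes a polynomial on `ℝ^{2m}`, and real points are Zariski dense in `ℂ^{2m}`. Hence the `b_p` are
pairwise orthogonal with `‖b_p‖² = M!/p! ≠ 0`, so the `C(M+m-1, M)` vectors `b_p` are linearly
independent in `ℂⁿ`.
-/

open Finset ComplexConjugate
open scoped InnerProductSpace

namespace MvPolynomial

variable {σ : Type*}

theorem eq_zero_of_eval_ofReal_eq_zero (P : MvPolynomial σ ℂ)
    (h : ∀ x : σ → ℝ, eval (fun i => (x i : ℂ)) P = 0) : P = 0 :=
  funext_set (fun _ => Set.range ((↑) : ℝ → ℂ))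
    (fun _ => Set.infinite_range_of_injective Complex.ofReal_injective)
    fun z hz => by
      choose x hx using fun i => hz i (Set.mem_univ i)
      simpa [show z = fun i => (x i : ℂ) from _root_.funext fun i => (hx i).symm] using h x

theorem eq_zero_of_eval_conj_eq_zero (P : MvPolynomial (σ ⊕ σ) ℂ)
    (h : ∀ w : σ → ℂ, eval (Sum.elim (conj ∘ w) w) P = 0) : P = 0 := by
  set Q := bind₁ (Sum.elim (fun i => X (Sum.inl i) - C Complex.I * X (Sum.inr i))
    (fun i => X (Sum.inl i) + C Complex.I * X (Sum.inr i))) P with hQdef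
  have eval_Q (z : σ ⊕ σ → ℂ) : eval z Q = eval (Sum.elim
      (fun i => z (Sum.inl i) - Complex.I * z (Sum.inr i))
      (fun i => z (Sum.inl i) + Complex.I * z (Sum.inr i))) P := by
    rw [hQdef, eval, eval₂Hom_bind₁]
    congr 1
    ext (i | i) <;> simp
  have hQ : Q = 0 := eq_zero_of_eval_ofReal_eq_zero Q fun x => by
    rw [eval_Q]
    convert h fun i => x (Sum.inl i) + Complex.I * x (Sum.inr i) using 2
    ext (i | i) <;> simp [Complex.conj_ofReal, sub_eq_add_neg]
  refine funext fun z => ?_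
  convert congrArg (eval (Sum.elim (fun i => (z (Sum.inl i) + z (Sum.inr i)) / 2)
    (fun i => (z (Sum.inr i) - z (Sum.inl i)) / (2 * Complex.I)))) hQ using 1
  · rw [eval_Q]
    congr 1
    ext (i | i) <;> simp <;> field_simp <;> ring
  · simp

theorem eq_zero_of_sum_conj_pow_mul_pow_eq_zero [Fintype σ] {S : Finset (σ → ℕ)}
    {c : (σ → ℕ) → (σ → ℕ) → ℂ}
    (h : ∀ w : σ → ℂ, ∑ p ∈ S, ∑ q ∈ S, c p q * (∏ i, conj (w i) ^ p i) * ∏ i, w i ^ q i = 0)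
    {p q : σ → ℕ} (hp : p ∈ S) (hq : q ∈ S) : c p q = 0 := by
  classical
  let E : (σ → ℕ) × (σ → ℕ) ≃ (σ ⊕ σ →₀ ℕ) :=
    (Equiv.sumArrowEquivProdArrow σ σ ℕ).symm.trans Finsupp.equivFunOnFinite.symm
  set P : MvPolynomial (σ ⊕ σ) ℂ := ∑ x ∈ S ×ˢ S, monomial (E x) (c x.1 x.2) with hPdef
  have hP : P = 0 := eq_zero_of_eval_conj_eq_zero P fun w => by
    rw [← h w, hPdef, sum_product, map_sum]
    refine sum_congr rfl fun p _ => ?_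
    rw [map_sum]
    refine sum_congr rfl fun q _ => ?_
    simp [E, eval_monomial, Finsupp.prod_pow, Fintype.prod_sum_type, mul_assoc]
  have := congrArg (coeff (E (p, q))) hP
  simpa [P, coeff_sum, coeff_monomial, E.apply_eq_iff_eq, hp, hq] using this

end MvPolynomial

theorem norm_sum_smul_sq_eq_sum_sum_inner {ι E : Type*} [NormedAddCommGroup E]
    [InnerProductSpace ℂ E] (s : Finset ι) (a : ι → ℂ) (v : ι → E) :
    ((‖∑ i ∈ s, a i • v i‖ ^ 2 : ℝ) : ℂ) =
      ∑ i ∈ s, ∑ j ∈ s, ⟪v i, v j⟫_ℂ * conj (a i) * a j := by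
  rw [show ((‖∑ i ∈ s, a i • v i‖ ^ 2 : ℝ) : ℂ) = _ by
    exact_mod_cast (inner_self_eq_norm_sq_to_K (∑ i ∈ s, a i • v i)).symm, sum_inner]
  refine sum_congr rfl fun i _ => ?_
  rw [inner_sum]
  refine sum_congr rfl fun j _ => ?_
  rw [inner_smul_left, inner_smul_right]
  ring

theorem sum_norm_sq_pow_eq_sum_piAntidiag {σ : Type*} [Fintype σ] [DecidableEq σ]
    (w : σ → ℂ) (M : ℕ) :
    (((∑ i, ‖w i‖ ^ 2) ^ M : ℝ) : ℂ) = ∑ p ∈ piAntidiag univ M,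
      (Nat.multinomial univ p : ℂ) * (∏ i, conj (w i) ^ p i) * ∏ i, w i ^ p i := by
  calc (((∑ i, ‖w i‖ ^ 2) ^ M : ℝ) : ℂ)
      = (∑ i, conj (w i) * w i) ^ M := by push_cast [Complex.conj_mul']; rfl
    _ = _ := by
      rw [sum_pow_eq_sum_piAntidiag]
      simp only [mul_pow, prod_mul_distrib, mul_assoc]

theorem card_piAntidiag_univ {σ : Type*} [Fintype σ] [DecidableEq σ] (M : ℕ) :
    #(piAntidiag (univ : Finset σ) M) = (Fintype.card σ + M - 1).choose M := by
  rw [← Sym.card_sym_eq_choose, ← Fintype.card_coe]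
  refine Fintype.card_congr ((Equiv.subtypeEquivRight fun f => ?_).trans
    (Sym.equivNatSumOfFintype σ M).symm)
  simp [mem_piAntidiag]

section Orthogonality

variable {σ E : Type*} [Fintype σ] [DecidableEq σ] [NormedAddCommGroup E] [InnerProductSpace ℂ E]
  {M : ℕ} {b : (σ → ℕ) → E}

theorem inner_eq_ite_multinomial_of_sum_norm_sq_pow_eq
    (h : ∀ w : σ → ℂ, (∑ i, ‖w i‖ ^ 2) ^ M =
      ‖∑ p ∈ piAntidiag univ M, (∏ i, w i ^ p i) • b p‖ ^ 2)
    {p q : σ → ℕ} (hp : p ∈ piAntidiag univ M) (hq : q ∈ piAntidiag univ M) :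
    ⟪b p, b q⟫_ℂ = if p = q then (Nat.multinomial univ p : ℂ) else 0 := by
  refine sub_eq_zero.1 (MvPolynomial.eq_zero_of_sum_conj_pow_mul_pow_eq_zero
    (c := fun p q => ⟪b p, b q⟫_ℂ - if p = q then (Nat.multinomial univ p : ℂ) else 0)
    (fun w => ?_) hp hq)
  have hnorm := norm_sum_smul_sq_eq_sum_sum_inner (piAntidiag univ M) (fun p => ∏ i, w i ^ p i) b
  simp only [map_prod, map_pow] at hnorm
  simp only [sub_mul, ite_mul, zero_mul, sum_sub_distrib, sum_ite_eq, sum_ite_mem, inter_self,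
    ← hnorm, ← h w, sum_norm_sq_pow_eq_sum_piAntidiag, sub_self]

theorem linearIndependent_of_sum_norm_sq_pow_eq
    (h : ∀ w : σ → ℂ, (∑ i, ‖w i‖ ^ 2) ^ M =
      ‖∑ p ∈ piAntidiag univ M, (∏ i, w i ^ p i) • b p‖ ^ 2) :
    LinearIndependent ℂ fun p : piAntidiag (univ : Finset σ) M => b p := by
  refine linearIndependent_of_ne_zero_of_inner_eq_zero (fun p hp => ?_) fun p q hpq => ?_
  · have := inner_eq_ite_multinomial_of_sum_norm_sq_pow_eq h p.2 p.2
    rw [hp, inner_zero_left, if_pos rfl] at this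
    exact Nat.cast_ne_zero.2 (Nat.multinomial_pos _ _).ne' this.symm
  · exact (inner_eq_ite_multinomial_of_sum_norm_sq_pow_eq h p.2 q.2).trans
      (if_neg (Subtype.coe_ne_coe.2 hpq))

end Orthogonality

/-- If there are vectors `b_p ∈ ℂⁿ` with `‖w‖^{2M} = ‖∑_{|p|=M} w^p b_p‖²` for
all `w ∈ ℂᵐ`, then `n ≥ (M+m-1)!/(M!(m-1)!)`. -/
theorem dimension_inequality (m n M : ℕ) (hm : 0 < m)
    (b : (Fin m → ℕ) → EuclideanSpace ℂ (Fin n))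
    (h : ∀ w : Fin m → ℂ,
      (∑ i, ‖w i‖ ^ 2) ^ M =
        ‖∑ p ∈ Finset.Nat.antidiagonalTuple m M, (∏ i, w i ^ p i) • b p‖ ^ 2) :
    (M + m - 1).factorial / (M.factorial * (m - 1).factorial) ≤ n := by
  rw [← piAntidiag_univ_fin_eq_antidiagonalTuple] at h
  have hcard := (linearIndependent_of_sum_norm_sq_pow_eq h).fintype_card_le_finrank
  rwa [Fintype.card_coe, card_piAntidiag_univ, Fintype.card_fin, finrank_euclideanSpace_fin,
    add_comm, Nat.choose_eq_factorial_div_factorial (by omega),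
    show M + m - 1 - M = m - 1 by omega] at hcard
end

section
/- Let G : ℂ^m → ℂ^n be a polynomial map with G(0) = 0 (every monomial of each component has total degree ≥ 1), and suppose G is not identically zero and there exist positive integers α, β such that (‖w‖^2)^α = (‖G(w)‖^2)^β for all w ∈ ℂ^m. Then β divides α. -/
/-!
Restrict to the real line `t ↦ t • w` through a point `w` with `G w ≠ 0`. There
`t ↦ ‖G (t • w)‖²` is a complex polynomial `f` evaluated at real `t`, and the hypothesis becomes
`f ^ β = ‖w‖^(2α) X^(2α)` in `ℂ[X]`. Since `X` is prime, `f = a X^d` with `β d = 2α`, and `d` is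
even because `f 1 > 0` while `f (-1) = (-1)^d f 1 ≥ 0`.
-/

open Polynomial

theorem Polynomial.exists_eq_C_mul_X_pow_of_pow_eq_C_mul_X_pow {K : Type*} [Field K]
    {f : K[X]} {β N : ℕ} {c : K} (hβ : β ≠ 0) (hf : f ≠ 0) (h : f ^ β = C c * X ^ N) :
    ∃ a d, f = C a * X ^ d ∧ β * d = N := by
  have hc : c ≠ 0 := by
    rintro rfl
    exact hf (pow_eq_zero_iff hβ |>.1 (by simpa using h))
  have hdvd : f ∣ X ^ N := (dvd_C_mul hc).1 (h ▸ dvd_pow_self f hβ)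
  obtain ⟨d, -, u, hu⟩ := (dvd_prime_pow prime_X N).1 hdvd
  obtain ⟨a, -, ha⟩ := isUnit_iff.1 (u⁻¹).isUnit
  have hfa : f = C a * X ^ d := by rw [ha, ← hu, mul_comm, Units.mul_inv_cancel_right]
  refine ⟨a, d, hfa, ?_⟩
  have hdeg := congrArg natDegree h
  rwa [natDegree_pow, natDegree_C_mul_X_pow _ _ hc, hfa, natDegree_C_mul_X_pow] at hdeg
  rintro rfl
  simp [hfa] at hf

theorem Polynomial.even_of_eval_C_mul_X_pow {R : Type*} [CommRing R] [PartialOrder R]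
    [IsOrderedAddMonoid R] {a : R} {d : ℕ} (h₁ : 0 < eval 1 (C a * X ^ d))
    (h₂ : 0 ≤ eval (-1) (C a * X ^ d)) : Even d := by
  by_contra hd
  simp only [eval_mul, eval_C, eval_pow, eval_X, one_pow, mul_one,
    (Nat.not_even_iff_odd.1 hd).neg_one_pow, mul_neg_one] at h₁ h₂
  exact (neg_nonneg.1 h₂).not_gt h₁

theorem MvPolynomial.eval_aeval_C_mul_X {σ R : Type*} [CommRing R] (w : σ → R)
    (p : MvPolynomial σ R) (t : R) :
    (aeval (fun i => Polynomial.C (w i) * Polynomial.X) p).eval t =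
      eval (fun i => w i * t) p := by
  rw [← coe_aeval_eq_eval, ← Polynomial.coe_aeval_eq_eval, ← AlgHom.comp_apply, comp_aeval]
  simp

theorem Polynomial.eval_ofReal_mul_map_conj (p : ℂ[X]) (t : ℝ) :
    (p * p.map (starRingEnd ℂ)).eval (t : ℂ) = (‖p.eval (t : ℂ)‖ ^ 2 : ℝ) := by
  rw [eval_mul, eval_map]
  nth_rw 2 [← Complex.conj_ofReal]
  rw [eval₂_at_apply, Complex.mul_conj, ← Complex.sq_norm]

theorem Polynomial.eq_of_eval_ofReal_eq {p q : ℂ[X]}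
    (h : ∀ t : ℝ, p.eval (t : ℂ) = q.eval (t : ℂ)) : p = q :=
  eq_of_infinite_eval_eq p q <|
    (Set.infinite_range_of_injective Complex.ofReal_injective).mono <| by
      rintro _ ⟨t, rfl⟩
      exact h t

theorem exists_polynomial_eval_ofReal_eq_sum_norm_sq {ι σ : Type*} [Fintype ι]
    (P : ι → MvPolynomial σ ℂ) (w : σ → ℂ) :
    ∃ f : ℂ[X], ∀ t : ℝ,
      f.eval (t : ℂ) = (∑ j, ‖MvPolynomial.eval (fun i => w i * t) (P j)‖ ^ 2 : ℝ) := by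
  let Q j := MvPolynomial.aeval (fun i => C (w i) * X) (P j)
  refine ⟨∑ j, Q j * (Q j).map (starRingEnd ℂ), fun t => ?_⟩
  simp only [eval_finsetSum, eval_ofReal_mul_map_conj, Q, MvPolynomial.eval_aeval_C_mul_X,
    Complex.ofReal_sum]

theorem sum_norm_mul_ofReal_sq {ι : Type*} [Fintype ι] (w : ι → ℂ) (t : ℝ) :
    ∑ i, ‖w i * t‖ ^ 2 = t ^ 2 * ∑ i, ‖w i‖ ^ 2 := by
  simp only [Finset.mul_sum, norm_mul, Complex.norm_real, Real.norm_eq_abs, mul_pow, sq_abs,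
    mul_comm]

open ComplexOrder in
theorem exponent_relation_general (m n : ℕ) (α β : ℕ) (hβ : 0 < β)
    (P : Fin n → MvPolynomial (Fin m) ℂ)
    (hnz : ∃ (w : Fin m → ℂ) (j : Fin n), MvPolynomial.eval w (P j) ≠ 0)
    (h : ∀ w : Fin m → ℂ,
      (∑ i, ‖w i‖ ^ 2) ^ α =
        (∑ j, ‖MvPolynomial.eval w (P j)‖ ^ 2) ^ β) :
    β ∣ α := by
  obtain ⟨w, j₀, hw⟩ := hnz
  obtain ⟨f, hf⟩ := exists_polynomial_eval_ofReal_eq_sum_norm_sq P w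
  have hpos : 0 < ∑ j, ‖MvPolynomial.eval w (P j)‖ ^ 2 :=
    Finset.sum_pos' (fun j _ => by positivity) ⟨j₀, Finset.mem_univ _, by positivity⟩
  have hf_one : f.eval 1 = (∑ j, ‖MvPolynomial.eval w (P j)‖ ^ 2 : ℝ) := by
    simpa using hf 1
  have hf0 : f ≠ 0 := by
    rintro rfl
    rw [eval_zero, eq_comm, Complex.ofReal_eq_zero] at hf_one
    exact hpos.ne' hf_one
  have hpow : f ^ β = C (((∑ i, ‖w i‖ ^ 2 : ℝ) : ℂ) ^ α) * X ^ (2 * α) := by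
    refine eq_of_eval_ofReal_eq fun t => ?_
    have ht := h (fun i => w i * t)
    rw [sum_norm_mul_ofReal_sq] at ht
    simp only [eval_pow, hf, eval_mul, eval_C, eval_X, ← Complex.ofReal_pow, ← ht]
    push_cast
    ring
  obtain ⟨a, d, rfl, hd⟩ := exists_eq_C_mul_X_pow_of_pow_eq_C_mul_X_pow hβ.ne' hf0 hpow
  obtain ⟨k, rfl⟩ : Even d := by
    refine even_of_eval_C_mul_X_pow (hf_one ▸ Complex.zero_lt_real.2 hpos) ?_
    simpa using Complex.zero_le_real.2 (by positivity) |>.trans_eq (hf (-1)).symm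
  exact ⟨k, by linarith⟩

/-- Exponent relation: if a nonzero polynomial map `G : ℂᵐ → ℂⁿ` with `G(0)=0`
satisfies `(‖w‖²)^α = (‖G(w)‖²)^β`, then `β ∣ α`. -/
theorem exponent_relation (m n : ℕ) (α β : ℕ) (hα : 0 < α) (hβ : 0 < β)
    (P : Fin n → MvPolynomial (Fin m) ℂ)
    (hzero : ∀ j, MvPolynomial.eval (0 : Fin m → ℂ) (P j) = 0)
    (hnz : ∃ (w : Fin m → ℂ) (j : Fin n), MvPolynomial.eval w (P j) ≠ 0)
    (h : ∀ w : Fin m → ℂ,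
      (∑ i, ‖w i‖ ^ 2) ^ α =
        (∑ j, ‖MvPolynomial.eval w (P j)‖ ^ 2) ^ β) :
    β ∣ α :=
  exponent_relation_general m n α β hβ P hnz h
end

section
/- Let G : ℂ^m → ℂ^n be a polynomial map satisfying ‖G(w)‖^2 = ‖w‖^{2M} for all w ∈ ℂ^m, where M ≥ 1. Then every component of G is a homogeneous polynomial of degree exactly M (all monomials appearing in G have total degree M). -/
/-!
Restricting to the line `t ↦ t • w` with `t` real turns the hypothesis into the polynomial
identity `∑ⱼ Aⱼ(t) · conj(Aⱼ)(t) = ‖w‖^{2M} t^{2M}`, where the `d`-th coefficient of `Aⱼ` is the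
value at `w` of the degree-`d` homogeneous component of `Gⱼ`. If `D` is the largest (or the
smallest) degree in which some coefficient is nonzero, the coefficient of `t^{2D}` on the left
is `∑ⱼ ‖Aⱼ.coeff D‖² > 0`, so both extreme degrees equal `M`: every homogeneous component of
degree `d ≠ M` vanishes at every point.
-/

open ComplexConjugate Finset.HasAntidiagonal

namespace Polynomial

variable {R : Type*} [Semiring R]

theorem coeff_mul_add_eq_of_coeff_eq_zero_of_lt {p q : R[X]} {a b : ℕ}
    (hp : ∀ i < a, p.coeff i = 0) (hq : ∀ i < b, q.coeff i = 0) :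
    (p * q).coeff (a + b) = p.coeff a * q.coeff b := by
  rw [coeff_mul, Finset.sum_eq_single (a, b) ?_ fun h => (h (mem_antidiagonal.mpr rfl)).elim]
  rintro ⟨i, j⟩ hij hne
  rw [mem_antidiagonal] at hij
  rcases lt_or_ge i a with hi | hi
  · rw [hp i hi, zero_mul]
  rcases lt_or_ge j b with hj | hj
  · rw [hq j hj, mul_zero]
  obtain ⟨rfl, rfl⟩ := (add_eq_add_iff_eq_and_eq hi hj).mp hij.symm
  exact (hne rfl).elim

end Polynomial

namespace RCLike

variable {𝕜 ι : Type*} [RCLike 𝕜]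

theorem sum_mul_conj_ne_zero {s : Finset ι} {a : ι → 𝕜} (ha : ∃ j ∈ s, a j ≠ 0) :
    ∑ j ∈ s, a j * conj (a j) ≠ 0 := by
  obtain ⟨j, hj, hj0⟩ := ha
  simp_rw [mul_conj]
  exact_mod_cast (Finset.sum_pos' (fun i _ => by positivity) ⟨j, hj, by positivity⟩).ne'

end RCLike

namespace Polynomial

variable {𝕜 ι : Type*} [RCLike 𝕜] [Fintype ι]

theorem two_mul_eq_of_sum_mul_map_conj_eq_C_mul_X_pow {A : ι → 𝕜[X]} {c : 𝕜} {k : ℕ}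
    (hA : ∑ j, A j * (A j).map (starRingEnd 𝕜) = C c * X ^ k) {j : ι} {e : ℕ}
    (he : (A j).coeff e ≠ 0) : 2 * e = k := by
  classical
  set T := Finset.univ.biUnion fun j => (A j).support
  have mem_T : ∀ {j d}, (A j).coeff d ≠ 0 → d ∈ T := fun {j d} h =>
    Finset.mem_biUnion.mpr ⟨j, Finset.mem_univ _, mem_support_iff.mpr h⟩
  have hT : T.Nonempty := ⟨e, mem_T he⟩
  have diag {D : ℕ} (hD : D ∈ T)
      (hcoeff : ∀ j, (A j * (A j).map (starRingEnd 𝕜)).coeff (D + D) =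
        (A j).coeff D * conj ((A j).coeff D)) : D + D = k := by
    have := congrArg (coeff · (D + D)) hA
    simp only [finsetSum_coeff, hcoeff, coeff_C_mul_X_pow] at this
    obtain ⟨j, -, hj⟩ := Finset.mem_biUnion.mp hD
    by_contra hne
    rw [if_neg hne] at this
    exact RCLike.sum_mul_conj_ne_zero ⟨j, Finset.mem_univ _, mem_support_iff.mp hj⟩ this
  have hmax : T.max' hT + T.max' hT = k := by
    refine diag (T.max'_mem hT) fun j => ?_
    have hdeg : (A j).natDegree ≤ T.max' hT :=
      natDegree_le_iff_coeff_eq_zero.mpr fun d hd => by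
        by_contra h
        exact (not_le.mpr hd) (T.le_max' d (mem_T h))
    rw [coeff_mul_add_eq_of_natDegree_le hdeg ((natDegree_map_le).trans hdeg), coeff_map]
  have hmin : T.min' hT + T.min' hT = k := by
    refine diag (T.min'_mem hT) fun j => ?_
    have hlow : ∀ d < T.min' hT, (A j).coeff d = 0 := fun d hd => by
      by_contra h
      exact (not_le.mpr hd) (T.min'_le d (mem_T h))
    rw [coeff_mul_add_eq_of_coeff_eq_zero_of_lt hlow fun d hd => by rw [coeff_map, hlow d hd,
      map_zero], coeff_map]
  have := T.min'_le e (mem_T he)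
  have := T.le_max' e (mem_T he)
  omega

end Polynomial

namespace MvPolynomial

variable {R σ : Type*} [CommSemiring R]

noncomputable def restrictToLine (w : σ → R) : MvPolynomial σ R →ₐ[R] Polynomial R :=
  aeval fun i => Polynomial.C (w i) * Polynomial.X

theorem eval_restrictToLine (w : σ → R) (p : MvPolynomial σ R) (t : R) :
    (restrictToLine w p).eval t = eval (t • w) p := by
  rw [restrictToLine, ← Polynomial.coe_aeval_eq_eval, ← AlgHom.comp_apply, comp_aeval,
    ← coe_aeval_eq_eval]
  simp only [Polynomial.aeval_mul, Polynomial.aeval_C, Polynomial.aeval_X,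
    Algebra.algebraMap_self, RingHom.id_apply, mul_comm]
  rfl

theorem IsHomogeneous.restrictToLine_eq {p : MvPolynomial σ R} {d : ℕ} (hp : p.IsHomogeneous d)
    (w : σ → R) : restrictToLine w p = Polynomial.C (eval w p) * Polynomial.X ^ d := by
  conv_lhs => rw [p.as_sum]
  conv_rhs => rw [p.as_sum]
  simp only [map_sum, Finset.sum_mul, restrictToLine, aeval_monomial, eval_monomial]
  refine Finset.sum_congr rfl fun s hs => ?_
  have hdeg : ∑ i ∈ s.support, s i = d := by
    rw [← hp (mem_support_iff.mp hs), Finsupp.weight_apply, Finsupp.sum]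
    simp
  simp only [Finsupp.prod, mul_pow, Finset.prod_mul_distrib, ← Polynomial.C_pow,
    ← map_prod, Finset.prod_pow_eq_pow_sum, hdeg, Polynomial.algebraMap_eq, map_mul, mul_assoc]

theorem coeff_restrictToLine (w : σ → R) (p : MvPolynomial σ R) (d : ℕ) :
    (restrictToLine w p).coeff d = eval w (homogeneousComponent d p) := by
  conv_lhs => rw [← sum_homogeneousComponent p]
  simp only [map_sum, (homogeneousComponent_isHomogeneous _ p).restrictToLine_eq,
    Polynomial.finsetSum_coeff, Polynomial.coeff_C_mul_X_pow, Finset.sum_ite_eq, Finset.mem_range]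
  split_ifs with hd
  · rfl
  · rw [homogeneousComponent_eq_zero _ _ (by omega), map_zero]

theorem isHomogeneous_of_homogeneousComponent_eq_zero {p : MvPolynomial σ R} {n : ℕ}
    (hp : ∀ d ≠ n, homogeneousComponent d p = 0) : p.IsHomogeneous n := by
  intro s hs
  by_contra hne
  replace hne : s.degree ≠ n := by rwa [Finsupp.degree_eq_weight_one]
  have := coeff_homogeneousComponent (φ := p) (n := s.degree) s
  rw [hp _ hne, if_pos rfl, coeff_zero] at this
  exact hs this.symm

theorem sum_restrictToLine_mul_map_conj {𝕜 σ ι : Type*} [RCLike 𝕜] [Fintype σ] [Fintype ι]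
    {P : ι → MvPolynomial σ 𝕜} {M : ℕ}
    (hP : ∀ w : σ → 𝕜, ∑ j, ‖eval w (P j)‖ ^ 2 = (∑ i, ‖w i‖ ^ 2) ^ M) (w : σ → 𝕜) :
    ∑ j, restrictToLine w (P j) * (restrictToLine w (P j)).map (starRingEnd 𝕜) =
      Polynomial.C (((∑ i, ‖w i‖ ^ 2) ^ M : ℝ) : 𝕜) * Polynomial.X ^ (2 * M) := by
  refine Polynomial.eq_of_infinite_eval_eq _ _
    ((Set.infinite_range_of_injective RCLike.ofReal_injective).mono ?_)
  rintro _ ⟨t, rfl⟩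
  have eval_conj (p : Polynomial 𝕜) :
      (p.map (starRingEnd 𝕜)).eval (t : 𝕜) = conj (p.eval (t : 𝕜)) := by
    rw [Polynomial.eval_map, ← RCLike.conj_ofReal t, Polynomial.eval₂_at_apply, RCLike.conj_ofReal]
  have norm_smul_sq (i : σ) : ‖((t : 𝕜) • w) i‖ ^ 2 = t ^ 2 * ‖w i‖ ^ 2 := by
    rw [Pi.smul_apply, norm_smul, mul_pow, RCLike.norm_ofReal, sq_abs]
  simp only [Set.mem_ofPred_eq, Polynomial.eval_finsetSum, Polynomial.eval_mul, eval_conj,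
    RCLike.mul_conj, eval_restrictToLine, Polynomial.eval_C, Polynomial.eval_pow,
    Polynomial.eval_X]
  simp only [← RCLike.ofReal_pow, ← RCLike.ofReal_sum, hP, norm_smul_sq, ← Finset.mul_sum]
  push_cast
  ring

end MvPolynomial

theorem components_homogeneous_general (m n M : ℕ)
    (P : Fin n → MvPolynomial (Fin m) ℂ)
    (h : ∀ w : Fin m → ℂ,
      ∑ j, ‖MvPolynomial.eval w (P j)‖ ^ 2 =
        (∑ i, ‖w i‖ ^ 2) ^ M) :
    ∀ j, (P j).IsHomogeneous M := by
  intro j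
  refine MvPolynomial.isHomogeneous_of_homogeneousComponent_eq_zero fun d hd =>
    MvPolynomial.funext fun w => ?_
  by_contra hne
  rw [map_zero, ← MvPolynomial.coeff_restrictToLine] at hne
  have := Polynomial.two_mul_eq_of_sum_mul_map_conj_eq_C_mul_X_pow
    (MvPolynomial.sum_restrictToLine_mul_map_conj h w) hne
  omega

/-- If a polynomial map `G : ℂᵐ → ℂⁿ` satisfies `‖G(w)‖² = ‖w‖^{2M}` with
`M ≥ 1`, then every component of `G` is homogeneous of degree `M`. -/
theorem components_homogeneous (m n M : ℕ) (hM : 1 ≤ M)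
    (P : Fin n → MvPolynomial (Fin m) ℂ)
    (h : ∀ w : Fin m → ℂ,
      ∑ j, ‖MvPolynomial.eval w (P j)‖ ^ 2 =
        (∑ i, ‖w i‖ ^ 2) ^ M) :
    ∀ j, (P j).IsHomogeneous M :=
  components_homogeneous_general m n M P h
end

section
/- Let f : ℂ → ℂ be a polynomial, not identically zero, with f(0) = 0, and suppose there are positive integers α, β with |w|^{2α} = |f(w)|^{2β} for all w ∈ ℂ. Then β divides α and there exists a constant c ∈ ℂ with |c| = 1 such that f(w) = c·w^{α/β}. -/
/-!
Since `|w|^{2α} = |f(w)|^{2β}`, the only root of `f` is `0`; as `ℂ` is algebraically closed,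
`f = c Xⁿ`. Comparing the identity at `w = 1` gives `|c| = 1`, and then at any `w` with `|w| > 1`
gives `α = β n`.
-/

open Polynomial

theorem Polynomial.eval_eq_leadingCoeff_mul_pow_of_isRoot_imp_eq_zero {K : Type*} [Field K]
    [IsAlgClosed K] {f : K[X]} (hroot : ∀ r, f.IsRoot r → r = 0) (w : K) :
    f.eval w = f.leadingCoeff * w ^ f.natDegree := by
  have hcard : f.roots.card = f.natDegree := splits_iff_card_roots.mp (IsAlgClosed.splits f)
  have hroots : f.roots = Multiset.replicate f.natDegree 0 :=
    Multiset.eq_replicate.mpr ⟨hcard, fun r hr => hroot r (isRoot_of_mem_roots hr)⟩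
  conv_lhs => rw [← C_leadingCoeff_mul_prod_multiset_X_sub_C hcard, hroots]
  simp [Multiset.map_replicate, Multiset.prod_replicate]

theorem norm_eq_one_and_eq_mul_of_forall_norm_pow_eq {𝕜 : Type*} [NontriviallyNormedField 𝕜]
    {c : 𝕜} {a b n : ℕ} (hb : b ≠ 0) (h : ∀ w : 𝕜, ‖w‖ ^ a = ‖c * w ^ n‖ ^ b) :
    ‖c‖ = 1 ∧ a = b * n := by
  have hc : ‖c‖ = 1 := by
    have h1 : ‖c‖ ^ b = 1 := by simpa using (h 1).symm
    exact (pow_eq_one_iff_of_nonneg (norm_nonneg c) hb).mp h1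
  obtain ⟨w, hw⟩ := NormedField.exists_one_lt_norm 𝕜
  have hpow : ‖w‖ ^ a = ‖w‖ ^ (b * n) := by
    rw [h w, norm_mul, hc, one_mul, norm_pow, ← pow_mul, mul_comm n]
  exact ⟨hc, pow_right_injective₀ (zero_lt_one.trans hw) hw.ne' hpow⟩

theorem one_dim_classification_general (f : Polynomial ℂ)
    (α β : ℕ) (hβ : 0 < β)
    (h : ∀ w : ℂ, ‖w‖ ^ (2 * α) = ‖f.eval w‖ ^ (2 * β)) :
    β ∣ α ∧ ∃ c : ℂ, ‖c‖ = 1 ∧ ∀ w : ℂ, f.eval w = c * w ^ (α / β) := by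
  have hroot : ∀ r, f.IsRoot r → r = 0 := fun r hr => by
    have hr : ‖r‖ ^ (2 * α) = 0 := by simpa [hr.eq_zero, hβ.ne'] using h r
    exact norm_eq_zero.mp (eq_zero_of_pow_eq_zero hr)
  have hmono := eval_eq_leadingCoeff_mul_pow_of_isRoot_imp_eq_zero hroot
  obtain ⟨hc, hαβ⟩ := norm_eq_one_and_eq_mul_of_forall_norm_pow_eq (b := 2 * β) (by positivity)
    fun w => (h w).trans (by rw [hmono])
  have hαβ : α = β * f.natDegree := by linarith
  refine ⟨⟨_, hαβ⟩, f.leadingCoeff, hc, fun w => ?_⟩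
  rw [hmono, hαβ, Nat.mul_div_cancel_left _ hβ]

/-- One-variable classification: if a nonzero polynomial `f` with `f(0)=0`
satisfies `|w|^{2α} = |f(w)|^{2β}` for all `w`, then `β ∣ α` and
`f(w) = c·w^{α/β}` for a unimodular constant `c`. -/
theorem one_dim_classification (f : Polynomial ℂ) (hf : f ≠ 0)
    (hf0 : f.eval 0 = 0) (α β : ℕ) (hα : 0 < α) (hβ : 0 < β)
    (h : ∀ w : ℂ, ‖w‖ ^ (2 * α) = ‖f.eval w‖ ^ (2 * β)) :
    β ∣ α ∧ ∃ c : ℂ, ‖c‖ = 1 ∧ ∀ w : ℂ, f.eval w = c * w ^ (α / β) :=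
  one_dim_classification_general f α β hβ h
end

section
/- Let G : ℂ^m → ℂ^n be a polynomial map with G(0) = 0, G not identically zero, and suppose ‖w‖^2 = ‖G(w)‖^{2β} for all w ∈ ℂ^m for some positive integer β. Then β = 1. -/
/-! Since `G(0) = 0`, each component of `G` restricted to a line `t ↦ t • w` is divisible by `t`,
so the identity on that line reads `‖t‖² ‖w‖² = ‖t‖^(2β) S(t)^β` with `S` continuous. For `β ≥ 2`,
cancelling `‖t‖²` and letting `t → 0` gives `‖w‖ = 0`, contradicting `G(w) ≠ 0`; and `β = 0` is
excluded by evaluating at `w = 0`. -/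

open Polynomial in
theorem MvPolynomial.exists_eval_smul_eq_mul_eval {R σ : Type*} [CommSemiring R]
    (p : MvPolynomial σ R) (hp : eval 0 p = 0) (w : σ → R) :
    ∃ q : R[X], ∀ t : R, eval (t • w) p = t * q.eval t := by
  set r : R[X] := eval₂ Polynomial.C (fun i => Polynomial.C (w i) * Polynomial.X) p
  have hr : ∀ t, r.eval t = eval (t • w) p := fun t => by
    have hC : (Polynomial.evalRingHom t).comp Polynomial.C = RingHom.id R := by ext; simp
    rw [polynomial_eval_eval₂, hC]
    simp only [Polynomial.eval_mul, Polynomial.eval_C, Polynomial.eval_X, mul_comm (w _) t]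
    rfl
  obtain ⟨q, hq⟩ : Polynomial.X ∣ r := by
    rw [X_dvd_iff, coeff_zero_eq_eval_zero, hr, zero_smul, hp]
  exact ⟨q, fun t => by rw [← hr, hq, Polynomial.eval_mul, Polynomial.eval_X]⟩

theorem eq_zero_of_norm_pow_mul_eq_norm_pow_mul {𝕜 : Type*} [NontriviallyNormedField 𝕜]
    {a b : ℕ} (hab : a < b) {A : ℝ} {F : 𝕜 → ℝ} (hF : Continuous F)
    (h : ∀ t : 𝕜, ‖t‖ ^ a * A = ‖t‖ ^ b * F t) : A = 0 := by
  have hcont : Continuous fun t : 𝕜 => ‖t‖ ^ (b - a) * F t := by fun_prop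
  have hext := hcont.ext_on (dense_compl_singleton 0) continuous_const fun t (ht : t ≠ 0) => by
    have := h t
    rw [← Nat.sub_add_cancel hab.le, pow_add, mul_comm (‖t‖ ^ (b - a)), mul_assoc] at this
    exact (mul_left_cancel₀ (pow_ne_zero _ (norm_ne_zero_iff.mpr ht)) this).symm
  simpa [Nat.sub_ne_zero_of_lt hab] using (congrFun hext 0).symm

theorem last_block_exponent_one_general (m n : ℕ) (β : ℕ)
    (P : Fin n → MvPolynomial (Fin m) ℂ)
    (hzero : ∀ j, MvPolynomial.eval (0 : Fin m → ℂ) (P j) = 0)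
    (hnz : ∃ (w : Fin m → ℂ) (j : Fin n), MvPolynomial.eval w (P j) ≠ 0)
    (h : ∀ w : Fin m → ℂ,
      ∑ i, ‖w i‖ ^ 2 =
        (∑ j, ‖MvPolynomial.eval w (P j)‖ ^ 2) ^ β) :
    β = 1 := by
  have hβ : β ≠ 0 := by
    rintro rfl
    simpa using h 0
  obtain ⟨w, j, hwj⟩ := hnz
  choose q hq using fun j => (P j).exists_eval_smul_eq_mul_eval (hzero j) w
  by_contra hβ1
  have hw : ∑ i, ‖w i‖ ^ 2 = 0 := by
    refine eq_zero_of_norm_pow_mul_eq_norm_pow_mul (a := 2) (b := 2 * β) (by omega)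
      (F := fun t : ℂ => (∑ j, ‖(q j).eval t‖ ^ 2) ^ β) (by fun_prop) fun t => ?_
    calc ‖t‖ ^ 2 * ∑ i, ‖w i‖ ^ 2 = ∑ i, ‖(t • w) i‖ ^ 2 := by
          simp only [Finset.mul_sum, Pi.smul_apply, norm_smul, mul_pow]
      _ = (∑ j, ‖MvPolynomial.eval (t • w) (P j)‖ ^ 2) ^ β := h _
      _ = ‖t‖ ^ (2 * β) * (∑ j, ‖(q j).eval t‖ ^ 2) ^ β := by
          simp only [hq, norm_mul, mul_pow, ← Finset.mul_sum, pow_mul]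
  have hw0 : w = 0 := funext fun i => by
    simpa using (Finset.sum_eq_zero_iff_of_nonneg fun i _ => sq_nonneg ‖w i‖).1 hw i
  exact hwj (hw0 ▸ hzero j)

/-- If a nonzero polynomial map `G : ℂᵐ → ℂⁿ` with `G(0)=0` satisfies
`‖w‖² = (‖G(w)‖²)^β` for all `w`, then `β = 1`. -/
theorem last_block_exponent_one (m n : ℕ) (β : ℕ) (hβ : 0 < β)
    (P : Fin n → MvPolynomial (Fin m) ℂ)
    (hzero : ∀ j, MvPolynomial.eval (0 : Fin m → ℂ) (P j) = 0)
    (hnz : ∃ (w : Fin m → ℂ) (j : Fin n), MvPolynomial.eval w (P j) ≠ 0)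
    (h : ∀ w : Fin m → ℂ,
      ∑ i, ‖w i‖ ^ 2 =
        (∑ j, ‖MvPolynomial.eval w (P j)‖ ^ 2) ^ β) :
    β = 1 :=
  last_block_exponent_one_general m n β P hzero hnz h
end
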